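/- arXiv:1811.00126 — 8 statements merged into one kernel-verified Lean document; each statement's English description precedes it below -/
import Mathlib

section
/- Let q be a prime power, k ≥ 1 and d a positive integer with q ≥ dk + 1. Fix a subset S ⊆ F_q with |S| = dk + 1. For each polynomial f over F_q of degree at most k, let B_f(S) = {(x, f(x)) : x ∈ S} ⊆ S × F_q. Then the family {B_f(S) : f ∈ F_q[x]_{≤k}} is a d-cover-free family with (dk+1)q points and q^{k+1} blocks. -/
/-- Evaluation of the polynomial with coefficient vector `c` (degree at most `k`) at `x`. -/
def polyEval {F : Type*} [CommSemiring F] {k : ℕ} (c : Fin (k + 1) → F) (x : F) : F :=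
  ∑ i : Fin (k + 1), c i * x ^ (i : ℕ)

/-- `B` is a `d`-cover-free family: no block is contained in the union of
`d` (or fewer) other blocks. -/
def IsCFF {X : Type*} [DecidableEq X] (d : ℕ) (B : Finset (Finset X)) : Prop :=
  ∀ B₀ ∈ B, ∀ S' ⊆ B.erase B₀, S'.card ≤ d → ¬ B₀ ⊆ S'.sup id

lemma polyEval_eq_of_agree {F : Type*} [Field F] [DecidableEq F] {k : ℕ}
    (c c' : Fin (k + 1) → F) (T : Finset F) (hT : k + 1 ≤ T.card)
    (h : ∀ x ∈ T, polyEval c x = polyEval c' x) : c = c' := by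
  set p : Polynomial F := ∑ i : Fin (k + 1), Polynomial.C (c i - c' i) * Polynomial.X ^ (i : ℕ)
    with hp
  have hdeg : p.natDegree ≤ k := by
    apply Polynomial.natDegree_sum_le_of_forall_le
    intro i _
    refine le_trans (Polynomial.natDegree_C_mul_le _ _) ?_
    simpa using Nat.lt_succ_iff.mp i.2
  have heval : ∀ x ∈ T, p.eval x = 0 := by
    intro x hx
    have := h x hx
    simp only [hp, Polynomial.eval_finset_sum, Polynomial.eval_mul, Polynomial.eval_C,
      Polynomial.eval_pow, Polynomial.eval_X, sub_mul]
    rw [Finset.sum_sub_distrib]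
    simp only [polyEval] at this
    rw [this]; ring
  have hp0 : p = 0 :=
    Polynomial.eq_zero_of_natDegree_lt_card_of_eval_eq_zero' p T heval
      (lt_of_le_of_lt hdeg (by omega))
  funext j
  have hc : p.coeff (j : ℕ) = c j - c' j := by
    simp only [hp, Polynomial.finset_sum_coeff, Polynomial.coeff_C_mul, Polynomial.coeff_X_pow]
    rw [Finset.sum_eq_single j]
    · simp
    · intro i _ hij
      have : (i : ℕ) ≠ (j : ℕ) := fun h => hij (Fin.ext h)
      rw [if_neg (fun hji => this hji.symm), mul_zero]
    · simp
  rw [hp0] at hc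
  simp only [Polynomial.coeff_zero] at hc
  exact sub_eq_zero.mp hc.symm

theorem stmt3 (q k d : ℕ) (hq : IsPrimePow q) (hk : 1 ≤ k) (hd : 1 ≤ d)
    (hqd : d * k + 1 ≤ q)
    (F : Type*) [Field F] [Fintype F] [DecidableEq F] (hF : Fintype.card F = q)
    (S : Finset F) (hS : S.card = d * k + 1) :
    let Bf : (Fin (k + 1) → F) → Finset (F × F) :=
      fun c => S.image (fun x => (x, polyEval c x))
    (S ×ˢ (Finset.univ : Finset F)).card = (d * k + 1) * q ∧
    (Finset.univ.image Bf).card = q ^ (k + 1) ∧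
    IsCFF d (Finset.univ.image Bf) := by
  intro Bf
  classical
  -- membership characterization
  have hmem : ∀ (c : Fin (k + 1) → F) (x y : F), (x, y) ∈ Bf c ↔ x ∈ S ∧ y = polyEval c x := by
    intro c x y
    simp only [Bf, Finset.mem_image]
    constructor
    · rintro ⟨a, ha, h⟩
      obtain ⟨h1, h2⟩ := Prod.mk.injEq .. ▸ h
      subst h1; exact ⟨ha, h2.symm⟩
    · rintro ⟨hx, rfl⟩; exact ⟨x, hx, rfl⟩
  have hinj : Function.Injective Bf := by
    intro c c' h
    have hkd : k ≤ d * k := Nat.le_mul_of_pos_left k hd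
    apply polyEval_eq_of_agree c c' S (by omega)
    intro x hx
    have : (x, polyEval c x) ∈ Bf c' := h ▸ (hmem c x _).mpr ⟨hx, rfl⟩
    exact ((hmem c' x _).mp this).2
  refine ⟨?_, ?_, ?_⟩
  · rw [Finset.card_product, hS, Finset.card_univ, hF]
  · rw [Finset.card_image_of_injective _ hinj, Finset.card_univ, Fintype.card_fun,
      Fintype.card_fin, hF]
  · intro B₀ hB₀ S' hS' hScard hsub
    obtain ⟨c, _, rfl⟩ := Finset.mem_image.mp hB₀
    -- S is nonempty
    have hSne : S.Nonempty := Finset.card_pos.mp (by omega)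
    -- every x ∈ S has a block in S' containing (x, polyEval c x)
    have hcover : ∀ x ∈ S, ∃ B ∈ S', (x, polyEval c x) ∈ B := by
      intro x hx
      have : (x, polyEval c x) ∈ S'.sup id := hsub ((hmem c x _).mpr ⟨hx, rfl⟩)
      simpa using Finset.mem_sup.mp this
    have hS'ne : S'.Nonempty := by
      obtain ⟨x, hx⟩ := hSne
      obtain ⟨B, hB, -⟩ := hcover x hx
      exact ⟨B, hB⟩
    obtain ⟨B₁, hB₁⟩ := hS'ne
    set f : F → Finset (F × F) := fun x => if hx : x ∈ S then (hcover x hx).choose else B₁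
      with hf
    have hfmem : ∀ x ∈ S, f x ∈ S' ∧ (x, polyEval c x) ∈ f x := by
      intro x hx
      simp only [hf, dif_pos hx]
      exact ⟨(hcover x hx).choose_spec.1, (hcover x hx).choose_spec.2⟩
    have hpigeon : ∃ B ∈ S', k < (S.filter fun x => f x = B).card := by
      apply Finset.exists_lt_card_fiber_of_mul_lt_card_of_maps_to
        (fun x hx => (hfmem x hx).1)
      calc S'.card * k ≤ d * k := Nat.mul_le_mul_right k hScard
        _ < S.card := by omega
    obtain ⟨B, hBS', hBcard⟩ := hpigeon
    have hBmem := hS' hBS'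
    obtain ⟨hBne, hBimg⟩ := Finset.mem_erase.mp hBmem
    obtain ⟨c', -, rfl⟩ := Finset.mem_image.mp hBimg
    have : c = c' := by
      apply polyEval_eq_of_agree c c' (S.filter fun x => f x = Bf c') (by omega)
      intro x hx
      obtain ⟨hxS, hfx⟩ := Finset.mem_filter.mp hx
      have := (hfmem x hxS).2
      rw [hfx] at this
      exact ((hmem c' x _).mp this).2
    exact hBne (by rw [this])
end

section
/- Let q be a prime power, k ≥ 1, d ≥ 1 with q ≥ dk+1, and suppose k' ≥ k, d' ≥ d with q^2 ≥ d'k'+1. Consider the CFF incidence matrix C_{q,k,d} built from graphs of polynomials in F_q[x]_{≤k} restricted to dk+1 values, and C_{q^2,k',d'} built analogously over the extension field F_{q^2}, where F_q is viewed as a subfield of F_{q^2}. Then there exist row and column permutations of C_{q^2,k',d'} such that C_{q,k,d} appears as the top-left submatrix; i.e., the d-CFF((dk+1)q, q^{k+1}) embeds into the d'-CFF((d'k'+1)q^2, q^{2(k'+1)}). -/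
/-- A (Prop-valued) binary matrix `M` (rows `R`, columns `C`) is the incidence matrix of a
`d`-cover-free family: for every column `c₀` and every set `S` of at most `d` other columns,
some row has a one in `c₀` and zeros on all of `S`. -/
def MatCFF {R C : Type*} (d : ℕ) (M : R → C → Prop) : Prop :=
  ∀ c₀ : C, ∀ S : Finset C, c₀ ∉ S → S.card ≤ d →
    ∃ r, M r c₀ ∧ ∀ c ∈ S, ¬ M r c

open Polynomial Finset

section PolyEval

variable {R S : Type*} [CommSemiring R] [DecidableEq R]

theorem polyEval_eq_eval_ofFn {k : ℕ} (c : Fin (k + 1) → R) (x : R) :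
    polyEval c x = (ofFn (k + 1) c).eval x := by
  simp [polyEval, ofFn_eq_sum_monomial, eval_finsetSum]

variable [CommSemiring S] [DecidableEq S]

noncomputable def mapCoeffs (φ : R →+* S) (k m : ℕ) (c : Fin (k + 1) → R) : Fin (m + 1) → S :=
  toFn (m + 1) ((ofFn (k + 1) c).map φ)

theorem ofFn_mapCoeffs (φ : R →+* S) {k m : ℕ} (hkm : k ≤ m) (c : Fin (k + 1) → R) :
    ofFn (m + 1) (mapCoeffs φ k m c) = (ofFn (k + 1) c).map φ :=
  ofFn_comp_toFn_eq_id_of_natDegree_lt <|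
    (natDegree_map_le.trans_lt (ofFn_natDegree_lt (by omega) c)).trans_le (by omega)

theorem polyEval_mapCoeffs (φ : R →+* S) {k m : ℕ} (hkm : k ≤ m) (c : Fin (k + 1) → R)
    (x : R) : polyEval (mapCoeffs φ k m c) (φ x) = φ (polyEval c x) := by
  rw [polyEval_eq_eval_ofFn, ofFn_mapCoeffs φ hkm, eval_map_apply, polyEval_eq_eval_ofFn]

theorem mapCoeffs_injective (φ : R →+* S) (hφ : Function.Injective φ) {k m : ℕ}
    (hkm : k ≤ m) : Function.Injective (mapCoeffs φ k m) := by
  intro c c' h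
  have h' := congrArg (ofFn (m + 1)) h
  rw [ofFn_mapCoeffs φ hkm, ofFn_mapCoeffs φ hkm] at h'
  exact injective_ofFn _ (map_injective φ hφ h')

end PolyEval

section CoverFree

variable {F ι : Type*} [Field F] [Fintype ι]

theorem card_filter_polyEval_eq_le [DecidableEq F] {k : ℕ} {c c₀ : Fin (k + 1) → F}
    (hne : c ≠ c₀) (xs : ι ↪ F) : #{i | polyEval c (xs i) = polyEval c₀ (xs i)} ≤ k := by
  set s : Finset ι := {i | polyEval c (xs i) = polyEval c₀ (xs i)}
  by_contra! hlt
  have hdeg (v : Fin (k + 1) → F) : (ofFn (k + 1) v).degree < #s :=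
    (ofFn_degree_lt v).trans_le (by exact_mod_cast hlt)
  refine hne (injective_ofFn _ (eq_of_degrees_lt_of_eval_index_eq s xs.injective.injOn
    (hdeg c) (hdeg c₀) fun i hi => ?_))
  simpa [polyEval_eq_eval_ofFn] using (mem_filter.mp hi).2

theorem matCFF_polyEval {d k : ℕ} (xs : ι ↪ F) (hcard : d * k < Fintype.card ι) :
    MatCFF d (fun (r : ι × F) (c : Fin (k + 1) → F) => polyEval c (xs r.1) = r.2) := by
  classical
  intro c₀ S hc₀ hS
  let agree : (Fin (k + 1) → F) → Finset ι :=
    fun c => {i | polyEval c (xs i) = polyEval c₀ (xs i)}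
  have hbad : #(S.biUnion agree) < Fintype.card ι :=
    calc #(S.biUnion agree) ≤ ∑ c ∈ S, #(agree c) := card_biUnion_le
      _ ≤ ∑ _c ∈ S, k := sum_le_sum fun c hc =>
          card_filter_polyEval_eq_le (by rintro rfl; exact hc₀ hc) xs
      _ = #S * k := by rw [sum_const, smul_eq_mul]
      _ ≤ d * k := Nat.mul_le_mul_right k hS
      _ < Fintype.card ι := hcard
  obtain ⟨i, -, hi⟩ := exists_mem_notMem_of_card_lt_card (t := univ) (by simpa using hbad)
  refine ⟨(i, polyEval c₀ (xs i)), rfl, fun c hc hci => hi ?_⟩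
  exact mem_biUnion.mpr ⟨c, hc, mem_filter.mpr ⟨mem_univ i, hci⟩⟩

end CoverFree

theorem Function.Embedding.exists_comp_eq_of_card_le {α β γ : Type*} [Fintype α] [Fintype β]
    [Fintype γ] (g : α ↪ γ) (hαβ : Fintype.card α ≤ Fintype.card β)
    (hβγ : Fintype.card β ≤ Fintype.card γ) :
    ∃ (f : β ↪ γ) (e : α ↪ β), ∀ a, f (e a) = g a := by
  classical
  obtain ⟨t, hgt, -, ht⟩ := exists_subsuperset_card_eq (subset_univ (univ.map g))
    (by simpa using hαβ) (by simpa using hβγ)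
  obtain ⟨f, hf⟩ := exists_of_card_eq_finset ht.symm
  have hrange : ∀ a, ∃ b, f b = g a := fun a => by
    simpa [← hf] using hgt (mem_map_of_mem g (mem_univ a))
  choose e he using hrange
  exact ⟨f, ⟨e, fun a a' h => g.injective (by rw [← he, ← he, h])⟩, he⟩

theorem stmt4_general (q k d k' d' : ℕ)
    (hkk' : k ≤ k') (hdd' : d ≤ d')
    (hq2 : d' * k' + 1 ≤ q ^ 2)
    (F E : Type*) [Field F] [Field E] [Fintype E]
    (hE : Fintype.card E = q ^ 2)
    (φ : F →+* E) (xs : Fin (d * k + 1) ↪ F) :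
    -- the small matrix `C_{q,k,d}`
    let Msmall : (Fin (d * k + 1) × F) → (Fin (k + 1) → F) → Prop :=
      fun r c => polyEval c (xs r.1) = r.2
    MatCFF d Msmall ∧
    -- the big matrix `C_{q²,k',d'}` for a suitable choice of the `d'k'+1` fixed elements,
    -- contains `C_{q,k,d}` as a submatrix after row/column permutation
    ∃ xs' : Fin (d' * k' + 1) ↪ E,
      MatCFF d' (fun (r : Fin (d' * k' + 1) × E) (c : Fin (k' + 1) → E) =>
        polyEval c (xs' r.1) = r.2) ∧
      ∃ (ρ : (Fin (d * k + 1) × F) → (Fin (d' * k' + 1) × E))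
        (σ : (Fin (k + 1) → F) → (Fin (k' + 1) → E)),
        Function.Injective ρ ∧ Function.Injective σ ∧
        ∀ r c, (polyEval (σ c) (xs' (ρ r).1) = (ρ r).2) ↔ Msmall r c := by
  classical
  intro Msmall
  have hN : d * k + 1 ≤ d' * k' + 1 := Nat.add_le_add_right (Nat.mul_le_mul hdd' hkk') 1
  obtain ⟨xs', e, hxs'⟩ := (xs.trans ⟨φ, φ.injective⟩).exists_comp_eq_of_card_le
    (β := Fin (d' * k' + 1)) (by simpa using hN) (by simpa [hE] using hq2)
  refine ⟨matCFF_polyEval xs (by simp), xs', matCFF_polyEval xs' (by simp),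
    Prod.map e φ, mapCoeffs φ k k', e.injective.prodMap φ.injective,
    mapCoeffs_injective φ φ.injective hkk', fun r c => ?_⟩
  simp only [Prod.map_fst, Prod.map_snd, hxs', Function.Embedding.trans_apply,
    Function.Embedding.coeFn_mk, polyEval_mapCoeffs φ hkk', φ.injective.eq_iff]
  exact Iff.rfl

theorem stmt4 (q k d k' d' : ℕ) (hq : IsPrimePow q)
    (hk : 1 ≤ k) (hd : 1 ≤ d) (hkk' : k ≤ k') (hdd' : d ≤ d')
    (hq1 : d * k + 1 ≤ q) (hq2 : d' * k' + 1 ≤ q ^ 2)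
    (F E : Type*) [Field F] [Fintype F] [Field E] [Fintype E]
    (hF : Fintype.card F = q) (hE : Fintype.card E = q ^ 2)
    (φ : F →+* E) (xs : Fin (d * k + 1) ↪ F) :
    -- the small matrix `C_{q,k,d}`
    let Msmall : (Fin (d * k + 1) × F) → (Fin (k + 1) → F) → Prop :=
      fun r c => polyEval c (xs r.1) = r.2
    MatCFF d Msmall ∧
    -- the big matrix `C_{q²,k',d'}` for a suitable choice of the `d'k'+1` fixed elements,
    -- contains `C_{q,k,d}` as a submatrix after row/column permutation
    ∃ xs' : Fin (d' * k' + 1) ↪ E,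
      MatCFF d' (fun (r : Fin (d' * k' + 1) × E) (c : Fin (k' + 1) → E) =>
        polyEval c (xs' r.1) = r.2) ∧
      ∃ (ρ : (Fin (d * k + 1) × F) → (Fin (d' * k' + 1) × E))
        (σ : (Fin (k + 1) → F) → (Fin (k' + 1) → E)),
        Function.Injective ρ ∧ Function.Injective σ ∧
        ∀ r c, (polyEval (σ c) (xs' (ρ r).1) = (ρ r).2) ↔ Msmall r c :=
  stmt4_general q k d k' d' hkk' hdd' hq2 F E hE φ xs
end

section
/- Let q be a prime power, k ≥ 1, d ≥ 1 with q ≥ dk + 1. For each i ≥ 0, let M_i be the incidence matrix with columns indexed by polynomials f ∈ F_{q^{2^i}}[x]_{≤k} and rows indexed by pairs (x_l, y) where x_l ranges over dk+1 fixed elements of the base field F_q and y ∈ F_{q^{2^i}}, with entry 1 iff f(x_l) = y. Then each M_i is a d-CFF((dk+1)q^{2^i}, q^{2^i(k+1)}), and the sequence (M_i) is a monotone family: M_i is the top-left submatrix of M_{i+1} (after suitable ordering), and the submatrix of M_{i+1} below M_i (new rows, old columns) is identically zero. -/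
open Polynomial in
lemma filter_card_le {F : Type*} [Field F] [DecidableEq F] {k n : ℕ} (c c' : Fin (k+1) → F)
    (hcc : c ≠ c') (pt : Fin n → F) (hpt : Function.Injective pt) :
    (Finset.univ.filter (fun l => polyEval c (pt l) = polyEval c' (pt l))).card ≤ k := by
  set p : F[X] := ∑ i : Fin (k+1), Polynomial.C (c i - c' i) * Polynomial.X ^ (i:ℕ) with hp
  have hcoeff : ∀ j : Fin (k+1), p.coeff j = c j - c' j := by
    intro j
    rw [hp, Polynomial.finset_sum_coeff]
    simp only [Polynomial.coeff_C_mul, Polynomial.coeff_X_pow, mul_ite, mul_one, mul_zero,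
      Fin.val_eq_val]
    rw [Finset.sum_ite_eq Finset.univ j]
    simp
  have hp0 : p ≠ 0 := by
    obtain ⟨j, hj⟩ := Function.ne_iff.1 hcc
    intro h
    apply hj
    have := hcoeff j
    rw [h] at this
    simpa [sub_eq_zero, eq_comm] using this
  have hdeg : p.natDegree ≤ k := by
    rw [Polynomial.natDegree_le_iff_coeff_eq_zero]
    intro m hm
    rw [hp, Polynomial.finset_sum_coeff]
    apply Finset.sum_eq_zero
    intro i _
    rw [Polynomial.coeff_C_mul, Polynomial.coeff_X_pow, if_neg (by omega), mul_zero]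
  have heval : ∀ x, p.eval x = polyEval c x - polyEval c' x := by
    intro x
    simp [hp, polyEval, Polynomial.eval_finset_sum, sub_mul, Finset.sum_sub_distrib]
  have hsub : (Finset.univ.filter (fun l => polyEval c (pt l) = polyEval c' (pt l))).image pt
      ⊆ p.roots.toFinset := by
    intro x hx
    simp only [Finset.mem_image, Finset.mem_filter] at hx
    obtain ⟨l, ⟨_, hl⟩, rfl⟩ := hx
    simp [Multiset.mem_toFinset, Polynomial.mem_roots, hp0, Polynomial.IsRoot, heval, sub_eq_zero, hl]
  calc (Finset.univ.filter (fun l => polyEval c (pt l) = polyEval c' (pt l))).card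
      = ((Finset.univ.filter (fun l => polyEval c (pt l) = polyEval c' (pt l))).image pt).card :=
        (Finset.card_image_of_injective _ hpt).symm
    _ ≤ p.roots.toFinset.card := Finset.card_le_card hsub
    _ ≤ Multiset.card p.roots := Multiset.toFinset_card_le _
    _ ≤ p.natDegree := Polynomial.card_roots' p
    _ ≤ k := hdeg

lemma polyEval_map {F G : Type*} [CommSemiring F] [CommSemiring G] (φ : F →+* G)
    {k : ℕ} (c : Fin (k + 1) → F) (x : F) :
    polyEval (fun m => φ (c m)) (φ x) = φ (polyEval c x) := by
  simp [polyEval, map_sum, map_mul, map_pow]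


theorem stmt8 (q k d : ℕ) (hq : IsPrimePow q) (hk : 1 ≤ k) (hd : 1 ≤ d)
    (hqd : d * k + 1 ≤ q)
    -- the tower of fields `E i = F_{q^{2^i}}` with compatible embeddings
    (E : ℕ → Type*) [∀ i, Field (E i)] [∀ i, Fintype (E i)]
    (hE : ∀ i, Fintype.card (E i) = q ^ 2 ^ i)
    (φ : ∀ i, E i →+* E (i + 1))
    (ι : ∀ i, E 0 →+* E i) (hι0 : ι 0 = RingHom.id (E 0))
    (hι : ∀ i, ι (i + 1) = (φ i).comp (ι i))
    -- `dk+1` fixed elements of the base field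
    (xs : Fin (d * k + 1) ↪ E 0) :
    let M : ∀ i, (Fin (d * k + 1) × E i) → (Fin (k + 1) → E i) → Prop :=
      fun i r c => polyEval c (ι i (xs r.1)) = r.2
    -- each `M i` is a d-CFF((dk+1) q^{2^i}, q^{2^i (k+1)})
    (∀ i, MatCFF d (M i)) ∧
    (∀ i, Fintype.card (Fin (d * k + 1) × E i) = (d * k + 1) * q ^ 2 ^ i ∧
          Fintype.card (Fin (k + 1) → E i) = q ^ (2 ^ i * (k + 1))) ∧
    -- `M i` is the top-left submatrix of `M (i+1)` (old rows/columns embed via φ i)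
    (∀ i (r : Fin (d * k + 1) × E i) (c : Fin (k + 1) → E i),
        M (i + 1) (r.1, φ i r.2) (fun m => φ i (c m)) ↔ M i r c) ∧
    -- and the block of new rows on old columns is identically zero
    (∀ i (j : Fin (d * k + 1)) (y : E (i + 1)) (c : Fin (k + 1) → E i),
        y ∉ Set.range (φ i) → ¬ M (i + 1) (j, y) (fun m => φ i (c m))) := by
  classical
  intro M
  refine ⟨?_, ?_, ?_, ?_⟩
  · intro i c₀ S hc₀ hS
    set pt : Fin (d * k + 1) → E i := fun l => ι i (xs l) with hpt
    have hptinj : Function.Injective pt := fun a b h => xs.injective ((ι i).injective h)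
    set bad : Finset (Fin (d * k + 1)) :=
      S.biUnion (fun c => Finset.univ.filter (fun l => polyEval c (pt l) = polyEval c₀ (pt l)))
      with hbaddef
    have hbad : bad.card ≤ d * k := by
      calc bad.card ≤ ∑ c ∈ S,
            (Finset.univ.filter (fun l => polyEval c (pt l) = polyEval c₀ (pt l))).card :=
            Finset.card_biUnion_le
        _ ≤ ∑ _c ∈ S, k := by
            apply Finset.sum_le_sum
            intro c hc
            exact filter_card_le c c₀ (fun h => hc₀ (h ▸ hc)) pt hptinj
        _ = S.card * k := by rw [Finset.sum_const, smul_eq_mul]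
        _ ≤ d * k := Nat.mul_le_mul_right k hS
    have : ∃ l, l ∉ bad := by
      by_contra h
      push_neg at h
      have : Finset.univ ⊆ bad := fun l _ => h l
      have := Finset.card_le_card this
      simp only [Finset.card_univ, Fintype.card_fin] at this
      omega
    obtain ⟨l, hl⟩ := this
    refine ⟨(l, polyEval c₀ (pt l)), rfl, fun c hc hMc => hl ?_⟩
    exact Finset.mem_biUnion.2 ⟨c, hc, Finset.mem_filter.2 ⟨Finset.mem_univ _, hMc⟩⟩
  · intro i
    constructor
    · simp [hE]
    · rw [Fintype.card_fun, hE, Fintype.card_fin, ← pow_mul]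
  · intro i r c
    show polyEval (fun m => φ i (c m)) (ι (i+1) (xs r.1)) = φ i r.2 ↔ _
    rw [hι i]
    simp only [RingHom.comp_apply]
    rw [polyEval_map]
    exact ⟨fun h => (φ i).injective h, fun h => h ▸ rfl⟩
  · intro i j y c hy hMc
    apply hy
    have : polyEval (fun m => φ i (c m)) (ι (i+1) (xs j)) = y := hMc
    rw [hι i] at this
    simp only [RingHom.comp_apply] at this
    rw [polyEval_map] at this
    exact ⟨_, this⟩
end

section
/- Let A be a packing array PA(n; t, k, v) and let w be a positive integer with w ≤ (k-1)/(t-1). Then the transpose of A is a separating hash family SHF(k; n, v, {1, w}): for any row index r of A and any w other row indices r_1, ..., r_w, there exists a column j such that A[r, j] ≠ A[r_l, j] for all l = 1, ..., w. -/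
/-- `A` is a packing array of strength `t`: in any `t` columns,
every `t`-tuple of symbols appears in at most one row. -/
def IsPA (t : ℕ) {n k v : ℕ} (A : Fin n → Fin k → Fin v) : Prop :=
  ∀ (cols : Fin t ↪ Fin k) (r₁ r₂ : Fin n),
    (∀ j, A r₁ (cols j) = A r₂ (cols j)) → r₁ = r₂

theorem stmt10 (n t k v w : ℕ) (A : Fin n → Fin k → Fin v)
    (hA : IsPA t A) (hw : 1 ≤ w) (hwk : w ≤ (k - 1) / (t - 1)) :
    -- the transpose of A is an SHF(k; n, v, {1, w}):
    ∀ r : Fin n, ∀ S : Finset (Fin n), r ∉ S → S.card ≤ w →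
      ∃ j : Fin k, ∀ r' ∈ S, A r j ≠ A r' j := by
  intro r S hrS hScard
  -- t - 1 must be positive, else hwk contradicts hw
  have ht1 : 0 < t - 1 := by
    by_contra h
    have : t - 1 = 0 := by omega
    rw [this, Nat.div_zero] at hwk
    omega
  have hmul : w * (t - 1) ≤ k - 1 := (Nat.le_div_iff_mul_le ht1).mp hwk
  have hk : 0 < k := by
    rcases Nat.eq_zero_or_pos k with hk0 | hk0
    · exfalso; rw [hk0] at hmul; simp at hmul
      rcases hmul with h | h <;> omega
    · exact hk0
  -- agreement set of two distinct rows has size ≤ t - 1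
  have agree : ∀ r' : Fin n, r' ≠ r →
      (Finset.univ.filter (fun j => A r j = A r' j)).card ≤ t - 1 := by
    intro r' hne
    by_contra h
    push_neg at h
    have hle : t ≤ (Finset.univ.filter (fun j => A r j = A r' j)).card := by omega
    obtain ⟨T, hTsub, hTcard⟩ := Finset.exists_subset_card_eq hle
    let e := T.orderIsoOfFin hTcard
    have hcols : Function.Injective (fun i : Fin t => (e i : Fin k)) := by
      intro a b hab
      exact e.injective (Subtype.coe_injective hab)
    have := hA ⟨fun i => (e i : Fin k), hcols⟩ r r' (by
      intro j
      have hmem : ((e j : Fin k)) ∈ Finset.univ.filter (fun j => A r j = A r' j) :=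
        hTsub (e j).2
      exact (Finset.mem_filter.mp hmem).2)
    exact hne this.symm
  -- the union of agreement sets is small
  set U := S.biUnion (fun r' => Finset.univ.filter (fun j => A r j = A r' j)) with hU
  have hUcard : U.card ≤ w * (t - 1) := by
    calc U.card ≤ ∑ r' ∈ S, (Finset.univ.filter (fun j => A r j = A r' j)).card :=
          Finset.card_biUnion_le
      _ ≤ ∑ _r' ∈ S, (t - 1) := by
          apply Finset.sum_le_sum
          intro r' hr'
          exact agree r' (fun h => hrS (h ▸ hr'))
      _ = S.card * (t - 1) := by rw [Finset.sum_const, smul_eq_mul]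
      _ ≤ w * (t - 1) := Nat.mul_le_mul_right _ hScard
  have hUlt : U.card < k := by omega
  have : U ≠ Finset.univ := by
    intro h
    rw [h, Finset.card_univ, Fintype.card_fin] at hUlt
    omega
  obtain ⟨j, hj⟩ : ∃ j : Fin k, j ∉ U := by
    by_contra h
    push_neg at h
    exact this (Finset.eq_univ_of_forall h)
  refine ⟨j, fun r' hr' hEq => hj ?_⟩
  exact Finset.mem_biUnion.mpr ⟨r', hr', Finset.mem_filter.mpr ⟨Finset.mem_univ _, hEq⟩⟩
end

section
/- Let A be a separating hash family SHF(N; n, m, {1, w}), viewed as an N × n matrix over an m-symbol alphabet. Define the mN × n binary matrix M indexed by pairs (i, x) with 1 ≤ i ≤ N, x in the alphabet, where M[(i,x), j] = 1 iff A[i, j] = x. Then M is the incidence matrix of a d-CFF(mN, n) for every d ≤ w. -/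
/-- `A` is a separating hash family of type `{1, w}`: for every column `c₀`
and every set of at most `w` other columns, some row separates `c₀` from all of them. -/
def IsSHF1 (w : ℕ) {N n m : ℕ} (A : Fin N → Fin n → Fin m) : Prop :=
  ∀ c₀ : Fin n, ∀ S : Finset (Fin n), c₀ ∉ S → S.card ≤ w →
    ∃ i, ∀ c ∈ S, A i c₀ ≠ A i c

theorem stmt12 (N n m w : ℕ) (A : Fin N → Fin n → Fin m) (hA : IsSHF1 w A)
    (d : ℕ) (hd : d ≤ w) :
    -- M[(i,x), j] = 1 iff A[i,j] = x, an mN × n binary matrix, is a d-CFF(mN, n)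
    MatCFF d (fun (r : Fin N × Fin m) (j : Fin n) => A r.1 j = r.2) := by
  intro c₀ S hS hcard
  obtain ⟨i, hi⟩ := hA c₀ S hS (hcard.trans hd)
  exact ⟨(i, A i c₀), rfl, fun c hc h => hi c hc h.symm⟩
end

section
/- Let P be a packing array PA(n; t, k, v) and let w ≤ (k-1)/(t-1). For each integer i with 1 ≤ i ≤ w, let k_i = i(t-1) + 1, and let M_i be the binary incidence matrix obtained (via the SHF-to-CFF construction) from the first k_i columns of P. Then M_i is an i-CFF(k_i · v, n). -/
theorem stmt13 (n t k v w : ℕ) (P : Fin n → Fin k → Fin v)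
    (hP : IsPA t P) (hw : 1 ≤ w) (hwk : w ≤ (k - 1) / (t - 1))
    (i : ℕ) (hi1 : 1 ≤ i) (hiw : i ≤ w) :
    -- the (i(t-1)+1)·v × n incidence matrix built from the first i(t-1)+1 columns of P
    -- is an i-CFF(k_i · v, n)
    MatCFF i (fun (r : Fin (i * (t - 1) + 1) × Fin v) (c : Fin n) =>
      P c (Fin.castLE (by
        rcases Nat.eq_zero_or_pos (t - 1) with h0 | h0
        · simp [h0, Nat.div_zero] at hwk; omega
        · have h1 : i * (t - 1) ≤ w * (t - 1) := Nat.mul_le_mul_right _ hiw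
          have h2 : w * (t - 1) ≤ k - 1 := (Nat.le_div_iff_mul_le h0).mp hwk
          have h3 : 0 < w * (t - 1) := Nat.mul_pos hw h0
          omega) r.1) = r.2) := by
  classical
  intro c₀ S hc₀ hScard
  have hK : i * (t - 1) + 1 ≤ k := by
    rcases Nat.eq_zero_or_pos (t - 1) with h0 | h0
    · simp [h0, Nat.div_zero] at hwk; omega
    · have h1 : i * (t - 1) ≤ w * (t - 1) := Nat.mul_le_mul_right _ hiw
      have h2 : w * (t - 1) ≤ k - 1 := (Nat.le_div_iff_mul_le h0).mp hwk
      have h3 : 0 < w * (t - 1) := Nat.mul_pos hw h0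
      omega
  set A : Fin n → Finset (Fin (i * (t - 1) + 1)) := fun c =>
    Finset.univ.filter (fun j => P c (Fin.castLE hK j) = P c₀ (Fin.castLE hK j)) with hA
  have hbound : ∀ c ∈ S, (A c).card ≤ t - 1 := by
    intro c hc
    by_contra hgt
    push_neg at hgt
    have hne : c ≠ c₀ := fun h => hc₀ (h ▸ hc)
    have ht : t ≤ (A c).card := by omega
    obtain ⟨T, hT, hTcard⟩ := Finset.exists_subset_card_eq ht
    refine hne (hP ((T.orderEmbOfFin hTcard).toEmbedding.trans
      (Fin.castLEEmb hK)) c c₀ ?_)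
    intro j
    have hmem : T.orderEmbOfFin hTcard j ∈ A c :=
      hT (Finset.orderEmbOfFin_mem T hTcard j)
    simp only [hA, Finset.mem_filter] at hmem
    exact hmem.2
  have hcount : (S.biUnion A).card ≤ i * (t - 1) := by
    refine le_trans Finset.card_biUnion_le ?_
    calc ∑ c ∈ S, (A c).card ≤ ∑ c ∈ S, (t - 1) := Finset.sum_le_sum hbound
      _ = S.card * (t - 1) := by rw [Finset.sum_const, smul_eq_mul]
      _ ≤ i * (t - 1) := Nat.mul_le_mul_right _ hScard
  obtain ⟨j, hj⟩ : ∃ j : Fin (i * (t - 1) + 1), j ∉ S.biUnion A := by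
    by_contra h
    push_neg at h
    have hsub : (Finset.univ : Finset (Fin (i * (t - 1) + 1))) ⊆ S.biUnion A :=
      fun j _ => h j
    have := Finset.card_le_card hsub
    simp [Finset.card_univ] at this
    omega
  refine ⟨(j, P c₀ (Fin.castLE hK j)), rfl, ?_⟩
  intro c hc hcontra
  exact hj (Finset.mem_biUnion.mpr ⟨c, hc,
    Finset.mem_filter.mpr ⟨Finset.mem_univ _, hcontra⟩⟩)
end

section
/- Let (P_l) be a sequence of packing arrays, P_l a PA(n_l; t_l, k_l, v_l), with nondecreasing parameters n_l, t_l, k_l, v_l, such that each P_l is the top-left submatrix of P_{l+1}. Let (d_l) be a nondecreasing sequence with d_l ≤ (k_l - 1)/(t_l - 1). Then the binary matrices M_l obtained from the transposed arrays via the SHF-to-CFF symbol-expansion construction form an embedding family, where M_l is a d_l-CFF(k_l · v_l, n_l). -/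
theorem stmt14 (n t k v d : ℕ → ℕ)
    (P : ∀ l, Fin (n l) → Fin (k l) → Fin (v l))
    (hPA : ∀ l, IsPA (t l) (P l))
    (hn : ∀ l, n l ≤ n (l + 1)) (ht : ∀ l, t l ≤ t (l + 1))
    (hk : ∀ l, k l ≤ k (l + 1)) (hv : ∀ l, v l ≤ v (l + 1))
    (hdm : ∀ l, d l ≤ d (l + 1)) (hd1 : ∀ l, 1 ≤ d l)
    (hdk : ∀ l, d l ≤ (k l - 1) / (t l - 1))
    -- each P_l is the top-left submatrix of P_{l+1}
    (hsub : ∀ l (r : Fin (n l)) (c : Fin (k l)),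
        ((P (l + 1) (Fin.castLE (hn l) r) (Fin.castLE (hk l) c) : ℕ)) = ((P l r c : ℕ))) :
    -- the symbol-expanded binary matrices M_l, with M_l[(j,x), c] = 1 iff P_l[c, j] = x,
    -- are d_l-CFF(k_l · v_l, n_l) matrices ...
    (∀ l, MatCFF (d l) (fun (r : Fin (k l) × Fin (v l)) (c : Fin (n l)) =>
        P l c r.1 = r.2)) ∧
    -- ... and each M_l is the top-left submatrix of M_{l+1}
    (∀ l (r : Fin (k l) × Fin (v l)) (c : Fin (n l)),
        (P (l + 1) (Fin.castLE (hn l) c) (Fin.castLE (hk l) r.1) = Fin.castLE (hv l) r.2)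
          ↔ P l c r.1 = r.2) := by
  constructor
  · intro l c₀ S hc₀ hS
    -- t l ≥ 2 and k l - 1 ≥ d l * (t l - 1)
    have ht1 : 1 ≤ t l - 1 := by
      by_contra h
      have h0 : t l - 1 = 0 := by omega
      have := hdk l
      rw [h0, Nat.div_zero] at this
      exact absurd this (by have := hd1 l; omega)
    have hmul : d l * (t l - 1) ≤ k l - 1 :=
      (Nat.le_div_iff_mul_le (by omega)).mp (hdk l)
    have hk1 : 1 ≤ k l := by
      have := Nat.mul_le_mul (hd1 l) ht1
      omega
    -- agreement sets
    have agree_card : ∀ c ∈ S,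
        (Finset.univ.filter (fun j => P l c j = P l c₀ j)).card ≤ t l - 1 := by
      intro c hc
      by_contra h
      push_neg at h
      obtain ⟨T, hTsub, hTcard⟩ := Finset.exists_subset_card_eq
        (s := Finset.univ.filter (fun j => P l c j = P l c₀ j)) (n := t l) (by omega)
      set e : Fin (t l) ↪ Fin (k l) :=
        ((T.orderIsoOfFin hTcard).toEquiv.toEmbedding.trans (Function.Embedding.subtype _))
      have hce : c = c₀ := by
        apply hPA l e
        intro j
        have : (e j : Fin (k l)) ∈ T := (T.orderIsoOfFin hTcard j).2
        have := hTsub this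
        simpa using (Finset.mem_filter.mp this).2
      exact hc₀ (hce ▸ hc)
    set B := S.biUnion (fun c => Finset.univ.filter (fun j => P l c j = P l c₀ j)) with hBdef
    have hBcard : B.card ≤ d l * (t l - 1) := by
      calc B.card ≤ ∑ c ∈ S, (Finset.univ.filter (fun j => P l c j = P l c₀ j)).card :=
            Finset.card_biUnion_le
        _ ≤ ∑ _c ∈ S, (t l - 1) := Finset.sum_le_sum agree_card
        _ = S.card * (t l - 1) := by rw [Finset.sum_const, smul_eq_mul]
        _ ≤ d l * (t l - 1) := Nat.mul_le_mul_right _ hS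
    obtain ⟨j, hj⟩ : ∃ j : Fin (k l), j ∉ B := by
      by_contra h
      push_neg at h
      have : B = Finset.univ := Finset.eq_univ_of_forall h
      have : B.card = k l := by rw [this, Finset.card_univ, Fintype.card_fin]
      omega
    refine ⟨(j, P l c₀ j), rfl, ?_⟩
    intro c hc hcontra
    exact hj (Finset.mem_biUnion.mpr ⟨c, hc, by simpa using hcontra⟩)
  · intro l r c
    constructor
    · intro h
      have := hsub l c r.1
      apply Fin.ext
      rw [← this, h]
      simp
    · intro h
      apply Fin.ext
      rw [hsub l c r.1, h]
      simp
end

section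
/- Let q be a prime power and t ≤ q. The array whose rows are indexed by polynomials f ∈ F_q[x]_{≤ t-1} and whose columns are indexed by elements of F_q, with entry f(c) in position (f, c), is an orthogonal array OA(q^t; t, q, q): in any t columns, every t-tuple of symbols appears in exactly one row. -/
theorem stmt16 (t : ℕ) (F : Type*) [Field F] [Fintype F] [DecidableEq F]
    (ht : t ≤ Fintype.card F) :
    -- the array has q^t rows (indexed by coefficient vectors, i.e. polys of degree ≤ t-1)
    Fintype.card (Fin t → F) = Fintype.card F ^ t ∧
    -- in any t columns (distinct points of F), every t-tuple appears in exactly one row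
    ∀ (cols : Fin t ↪ F) (y : Fin t → F),
      ∃! c : Fin t → F, ∀ j, (∑ m : Fin t, c m * (cols j) ^ (m : ℕ)) = y j := by
  refine ⟨by simp, fun cols y => ?_⟩
  set A : Matrix (Fin t) (Fin t) F := Matrix.vandermonde (fun j => cols j) with hA
  have hdet : IsUnit A := by
    rw [Matrix.isUnit_iff_isUnit_det]
    rw [hA, Matrix.det_vandermonde]
    refine (Finset.prod_ne_zero_iff.mpr fun i _ => Finset.prod_ne_zero_iff.mpr
      fun j hj => sub_ne_zero.mpr fun h => ?_).isUnit
    have := cols.injective h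
    simp [Finset.mem_Ioi] at hj
    omega
  have hbij : Function.Bijective (A.mulVec) := by
    refine ⟨Matrix.mulVec_injective_iff_isUnit.mpr hdet,
      Matrix.mulVec_surjective_iff_isUnit.mpr hdet⟩
  obtain ⟨c, hc⟩ := hbij.surjective y
  have key : ∀ c' : Fin t → F,
      (∀ j, (∑ m : Fin t, c' m * (cols j) ^ (m : ℕ)) = y j) ↔ A.mulVec c' = y := by
    intro c'
    constructor
    · intro h; funext j
      rw [← h j]
      simp [Matrix.mulVec, dotProduct, hA, Matrix.vandermonde, mul_comm]
    · intro h j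
      rw [← congrFun h j]
      simp [Matrix.mulVec, dotProduct, hA, Matrix.vandermonde, mul_comm]
  exact ⟨c, (key c).mpr hc, fun c' hc' => hbij.injective (by rw [(key c') |>.mp hc', hc])⟩
end
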